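/- Let H be a real Hilbert space, assume (H1), (H2) and (H3), and let x : [T0,T] → H be an absolutely continuous mapping with x(t) ∈ C(t) for all t ∈ [T0,T] and −x'(t) ∈ N_{C(t)}(x(t)) + f1(t, x(t)) + ∫_{T0}^t f2(t, s, x(s)) ds for almost every t ∈ [T0,T]. Then for almost every t ∈ [T0,T] one has ‖x'(t) + f1(t, x(t)) + ∫_{T0}^t f2(t, s, x(s)) ds‖ ≤ |υ'(t)| + ‖f1(t, x(t))‖ + ∫_{T0}^t ‖f2(t, s, x(s))‖ ds. -/

import Mathlib

/-!
Fix a time `t` at which `x` and `υ` are differentiable and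
`v := -x'(t) - f1(t, x(t)) - ∫ f2` is a proximal normal to `C(t)` at `x(t)`. For `s < t` the
moving-set hypothesis puts `x(s)` within `|υ(t) - υ(s)|` of a point `y ∈ C(t)`, and the proximal
normal inequality at `y` gives `⟪v, x(s) - x(t)⟫ ≤ ‖v‖ |υ(t) - υ(s)| + O((t - s)²)`. Dividing by
`t - s` and letting `s ↑ t` yields `⟪v, -x'(t)⟫ ≤ ‖v‖ |υ'(t)|`; since `-x'(t) - v = f1 + ∫ f2`,
this gives `‖v‖² ≤ ‖v‖ (|υ'(t)| + ‖f1 + ∫ f2‖)`.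
-/

open MeasureTheory Set
open scoped RealInnerProductSpace ENNReal Pointwise NNReal

noncomputable section

variable {H : Type*} [NormedAddCommGroup H] [InnerProductSpace ℝ H]

/-- The proximal normal cone of `S` at `x`. -/
def proxNormalCone (S : Set H) (x : H) : Set H :=
  {v | ∃ σ : ℝ, 0 ≤ σ ∧ ∃ δ : ℝ, 0 < δ ∧
    ∀ y ∈ S ∩ Metric.ball x δ, ⟪v, y - x⟫ ≤ σ * ‖y - x‖ ^ 2}

/-- Uniform `r`-prox-regularity, `r ∈ (0, ∞]`. -/
def IsProxRegular (r : ℝ≥0∞) (S : Set H) : Prop :=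
  ∀ x ∈ S, ∀ v ∈ proxNormalCone S x, v ≠ 0 →
    ∀ y ∈ S, ⟪‖v‖⁻¹ • v, y - x⟫ ≤ ((2 * r)⁻¹).toReal * ‖y - x‖ ^ 2

variable [CompleteSpace H]

/-- Absolutely continuous solution of the integro-differential sweeping process
`-x'(t) ∈ N_{C(t)}(x(t)) + f1(t, x(t)) + ∫_{T0}^t f2(t, s, x(s)) ds`. -/
def IsIDSweepingSol (T0 T : ℝ) (C : ℝ → Set H) (f1 : ℝ → H → H)
    (f2 : ℝ → ℝ → H → H) (x x' : ℝ → H) : Prop :=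
  IntervalIntegrable x' volume T0 T ∧
  (∀ t ∈ Icc T0 T, x t = x T0 + ∫ s in T0..t, x' s) ∧
  (∀ t ∈ Icc T0 T, x t ∈ C t) ∧
  (∀ᵐ t ∂volume, t ∈ Icc T0 T →
    (-x' t - f1 t (x t) - ∫ s in T0..t, f2 t s (x s)) ∈ proxNormalCone (C t) (x t))

open Filter Topology

section ProximalNormal

variable {E : Type*} [NormedAddCommGroup E] [InnerProductSpace ℝ E]

theorem exists_inner_sub_le_of_mem_proxNormalCone {S : Set E} {p v : E}
    (hv : v ∈ proxNormalCone S p) :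
    ∃ σ δ : ℝ, 0 < δ ∧ ∀ (q y : E) (d : ℝ), y ∈ S → ‖q - y‖ ≤ d → ‖q - p‖ + d < δ →
      ⟪v, q - p⟫ ≤ ‖v‖ * d + σ * (‖q - p‖ + d) ^ 2 := by
  obtain ⟨σ, hσ, δ, hδ, hv⟩ := hv
  refine ⟨σ, δ, hδ, fun q y d hy hqy hd => ?_⟩
  have hyp : ‖y - p‖ ≤ ‖q - p‖ + d :=
    calc ‖y - p‖ = ‖(q - p) - (q - y)‖ := by congr 1; abel
      _ ≤ ‖q - p‖ + ‖q - y‖ := norm_sub_le _ _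
      _ ≤ ‖q - p‖ + d := by gcongr
  have hnormal : ⟪v, y - p⟫ ≤ σ * ‖y - p‖ ^ 2 :=
    hv y ⟨hy, by rw [Metric.mem_ball, dist_eq_norm]; linarith [norm_nonneg (y - p)]⟩
  calc ⟪v, q - p⟫ = ⟪v, q - y⟫ + ⟪v, y - p⟫ := by rw [← inner_add_right, sub_add_sub_cancel]
    _ ≤ ‖v‖ * d + σ * (‖q - p‖ + d) ^ 2 := by
      gcongr
      · exact (real_inner_le_norm v _).trans (by gcongr)
      · exact hnormal.trans (by gcongr)

theorem inner_neg_le_of_mem_proxNormalCone_of_hasDerivWithinAt {S : Set E} {c : ℝ → E}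
    {c' v : E} {υ : ℝ → ℝ} {u t : ℝ} (hv : v ∈ proxNormalCone S (c t))
    (hc : HasDerivWithinAt c c' (Iio t) t) (hυ : HasDerivWithinAt υ u (Iio t) t)
    (hmove : ∀ᶠ s in 𝓝[<] t, ∃ y ∈ S, ‖c s - y‖ ≤ |υ s - υ t|) :
    ⟪v, -c'⟫ ≤ ‖v‖ * |u| := by
  obtain ⟨σ, δ, hδ, hstep⟩ := exists_inner_sub_le_of_mem_proxNormalCone hv
  rw [hasDerivWithinAt_iff_tendsto_slope' self_notMem_Iio] at hc hυ
  set rate : ℝ → ℝ := fun s => ‖slope c t s‖ + |slope υ t s|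
  have hrate : Tendsto rate (𝓝[<] t) (𝓝 (‖c'‖ + |u|)) := hc.norm.add hυ.abs
  have hgap : Tendsto (fun s => t - s) (𝓝[<] t) (𝓝 0) := by
    simpa using (tendsto_const_nhds (x := t)).sub (tendsto_nhdsWithin_of_tendsto_nhds
      (continuous_id.tendsto t))
  have hsmall : Tendsto (fun s => (t - s) * rate s) (𝓝[<] t) (𝓝 0) := by
    simpa using hgap.mul hrate
  have hlhs : Tendsto (fun s => ⟪v, -slope c t s⟫) (𝓝[<] t) (𝓝 ⟪v, -c'⟫) :=
    tendsto_const_nhds.inner hc.neg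
  have hrhs : Tendsto (fun s => ‖v‖ * |slope υ t s| + σ * ((t - s) * rate s) * rate s)
      (𝓝[<] t) (𝓝 (‖v‖ * |u|)) := by
    simpa using (hυ.abs.const_mul ‖v‖).add ((hsmall.const_mul σ).mul hrate)
  refine le_of_tendsto_of_tendsto hlhs hrhs ?_
  filter_upwards [self_mem_nhdsWithin, hmove, hsmall.eventually_lt_const hδ]
    with s (hs : s < t) ⟨y, hy, hcy⟩ hsδ
  have hh : 0 < t - s := sub_pos.2 hs
  have hc_sub : c s - c t = -((t - s) • slope c t s) := by
    rw [← neg_smul, neg_sub, sub_smul_slope, vsub_eq_sub]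
  have hυ_sub : |υ s - υ t| = (t - s) * |slope υ t s| := by
    rw [← vsub_eq_sub (υ s), ← sub_smul_slope, smul_eq_mul, abs_mul, abs_sub_comm s,
      abs_of_pos hh]
  have hdist : ‖c s - c t‖ + |υ s - υ t| = (t - s) * rate s := by
    rw [hc_sub, norm_neg, norm_smul, Real.norm_of_nonneg hh.le, hυ_sub]; ring
  have key := hstep (c s) y |υ s - υ t| hy hcy (hdist ▸ hsδ)
  rw [hdist, hc_sub, inner_neg_right, real_inner_smul_right, hυ_sub] at key
  refine le_of_mul_le_mul_left ?_ hh
  rw [inner_neg_right]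
  nlinarith [key]

theorem norm_le_add_norm_sub_of_inner_le {v w : E} {b : ℝ} (hb : 0 ≤ b)
    (h : ⟪v, w⟫ ≤ ‖v‖ * b) : ‖v‖ ≤ b + ‖w - v‖ := by
  have hsq : ‖v‖ * ‖v‖ ≤ ‖v‖ * (b + ‖w - v‖) :=
    calc ‖v‖ * ‖v‖ = ⟪v, w⟫ - ⟪v, w - v⟫ := by
          rw [inner_sub_right, real_inner_self_eq_norm_mul_norm]; ring
      _ ≤ ‖v‖ * b + ‖v‖ * ‖w - v‖ := by
          linarith [neg_abs_le ⟪v, w - v⟫, abs_real_inner_le_norm v (w - v)]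
      _ = ‖v‖ * (b + ‖w - v‖) := by ring
  rcases (norm_nonneg v).eq_or_lt with h0 | h0
  · rw [← h0]; positivity
  · exact le_of_mul_le_mul_left hsq h0

end ProximalNormal

theorem exists_norm_sub_le_of_mem_add_smul_closedBall {F : Type*} [NormedAddCommGroup F]
    [NormedSpace ℝ F] {S : Set F} {q : F} {a : ℝ}
    (hq : q ∈ S + a • Metric.closedBall (0 : F) 1) : ∃ y ∈ S, ‖q - y‖ ≤ |a| := by
  rw [smul_unitClosedBall, Real.norm_eq_abs] at hq
  obtain ⟨y, hy, z, hz, rfl⟩ := hq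
  exact ⟨y, hy, by simpa using hz⟩

theorem ae_hasDerivAt_of_eq_add_integral {F : Type*} [NormedAddCommGroup F] [NormedSpace ℝ F]
    [CompleteSpace F] {f f' : ℝ → F} {a b : ℝ} (hf' : IntervalIntegrable f' volume a b)
    (hf : ∀ t ∈ Icc a b, f t = f a + ∫ s in a..t, f' s) :
    ∀ᵐ t, t ∈ Ioo a b → HasDerivAt f (f' t) t := by
  filter_upwards [hf'.ae_hasDerivAt_integral] with t ht hIoo
  have hab : a ≤ b := (hIoo.1.trans hIoo.2).le
  have hprim := (ht (uIcc_of_le hab ▸ Ioo_subset_Icc_self hIoo) a left_mem_uIcc).const_add (f a)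
  refine hprim.congr_of_eventuallyEq ?_
  filter_upwards [Ioo_mem_nhds hIoo.1 hIoo.2] with s hs using hf s (Ioo_subset_Icc_self hs)

theorem integro_differential_sweeping_estimate
    (T0 T : ℝ)
    (C : ℝ → Set H)
    (υ υ' : ℝ → ℝ)
    (hυint : IntervalIntegrable υ' volume T0 T)
    (hυAC : ∀ t ∈ Icc T0 T, υ t = υ T0 + ∫ s in T0..t, υ' s)
    (hmove : ∀ s ∈ Icc T0 T, ∀ t ∈ Icc T0 T,
      C t ⊆ C s + |υ s - υ t| • Metric.closedBall (0 : H) 1)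
    (f1 : ℝ → H → H)
    (f2 : ℝ → ℝ → H → H)
    (x x' : ℝ → H)
    (hx : IsIDSweepingSol T0 T C f1 f2 x x') :
    ∀ᵐ t ∂volume, t ∈ Icc T0 T →
      ‖x' t + f1 t (x t) + ∫ s in T0..t, f2 t s (x s)‖ ≤
        |υ' t| + ‖f1 t (x t)‖ + ∫ s in T0..t, ‖f2 t s (x s)‖ := by
  obtain ⟨hx'int, hxeq, hxC, hcone⟩ := hx
  filter_upwards [ae_hasDerivAt_of_eq_add_integral hx'int hxeq,
    ae_hasDerivAt_of_eq_add_integral hυint hυAC, hcone, (Ioo_ae_eq_Icc (a := T0) (b := T)).mem_iff]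
    with t hxd hυd hnormal hIoo ht
  have ht' : t ∈ Ioo T0 T := hIoo.2 ht
  have htracked : ∀ᶠ s in 𝓝[<] t, ∃ y ∈ C t, ‖x s - y‖ ≤ |υ s - υ t| := by
    filter_upwards [Ioo_mem_nhdsLT ht'.1] with s hs
    have hs' : s ∈ Icc T0 T := ⟨hs.1.le, hs.2.le.trans ht.2⟩
    obtain ⟨y, hy, hxy⟩ := exists_norm_sub_le_of_mem_add_smul_closedBall (hmove t ht s hs' (hxC s hs'))
    exact ⟨y, hy, by rwa [abs_abs, abs_sub_comm] at hxy⟩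
  have hv := norm_le_add_norm_sub_of_inner_le (abs_nonneg _)
    (inner_neg_le_of_mem_proxNormalCone_of_hasDerivWithinAt (hnormal ht)
      (hxd ht').hasDerivWithinAt (hυd ht').hasDerivWithinAt htracked)
  calc ‖x' t + f1 t (x t) + ∫ s in T0..t, f2 t s (x s)‖
      = ‖-x' t - f1 t (x t) - ∫ s in T0..t, f2 t s (x s)‖ := by rw [← norm_neg]; congr 1; abel
    _ ≤ |υ' t| + ‖f1 t (x t) + ∫ s in T0..t, f2 t s (x s)‖ := by convert hv using 3; abel
    _ ≤ |υ' t| + ‖f1 t (x t)‖ + ∫ s in T0..t, ‖f2 t s (x s)‖ := by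
      grw [norm_add_le, intervalIntegral.norm_integral_le_integral_norm ht.1, add_assoc]
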